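/- arXiv:1303.1657 — 2 statements merged into one kernel-verified Lean document; each statement's English description precedes it below -/
import Mathlib

section
/- Let A be a finite connected subset of Z^d (d ≥ 2). Then the set Π(A) of plaquettes dual to the external edge-boundary of A has empty boundary: every (d−2)-facet of the dual lattice is incident to an even number of plaquettes of Π(A). -/
open Set Relation Filter

/-- Vertices of the lattice `ℤ^d`. -/
abbrev V (d : ℕ) := Fin d → ℤ

/-- Nearest-neighbour adjacency in `ℤ^d`: `x` and `y` differ by `1` in exactly
one coordinate. -/
def latAdj {d : ℕ} (x y : V d) : Prop :=
  ∃ i, (x i - y i).natAbs = 1 ∧ ∀ j, j ≠ i → x j = y j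

/-- Connectivity in the complement of `S` (paths avoiding `S`). -/
def connAvoid {d : ℕ} (S : Set (V d)) (a b : V d) : Prop :=
  ReflTransGen (fun u v => latAdj u v ∧ u ∉ S ∧ v ∉ S) a b

/-- The connected component of `w` in the complement of `S`. -/
def compOff {d : ℕ} (S : Set (V d)) (w : V d) : Set (V d) :=
  {z | connAvoid S w z}

/-- `y` lies outside `S` and is joined to infinity off `S` (its component in
the complement of `S` is infinite). -/
def toInfOff {d : ℕ} (S : Set (V d)) (y : V d) : Prop :=
  y ∉ S ∧ (compOff S y).Infinite

/-- `S ⊆ ℤ^d` is connected (as an induced subgraph of the lattice). -/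
def IsLatConnected {d : ℕ} (S : Set (V d)) : Prop :=
  ∀ a ∈ S, ∀ b ∈ S, ReflTransGen (fun u v => latAdj u v ∧ u ∈ S ∧ v ∈ S) a b

/-- `S` together with all its holes (the finite components of its complement). -/
def fillHoles {d : ℕ} (S : Set (V d)) : Set (V d) :=
  S ∪ {w | w ∉ S ∧ (compOff S w).Finite}

/-- We identify a plaquette with its dual edge, realized as an unordered pair of
adjacent lattice points.  `PiS S` is the set of plaquettes dual to edges
`⟨x,y⟩` with `x ∈ S` and `y ∉ S` joined to infinity off `S`. -/
def PiS {d : ℕ} (S : Set (V d)) : Set (Sym2 (V d)) :=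
  {e | ∃ x y, latAdj x y ∧ x ∈ S ∧ toInfOff S y ∧ e = s(x, y)}

/-- The `i`-th unit coordinate vector. -/
def uv {d : ℕ} (i : Fin d) : V d := fun k => if k = i then 1 else 0

/-- A unit square (2-facet) of `ℤ^d`; its dual is a `(d-2)`-facet of the dual
lattice `ℤ^d + (1/2,…,1/2)`. -/
structure Square (d : ℕ) where
  corner : V d
  i : Fin d
  j : Fin d
  hij : i ≠ j

/-- The four edges of a unit square.  A plaquette (identified with its dual
edge `e`) is incident to the `(d-2)`-facet dual to the square `F` exactly when
`e` is one of the four edges of `F`. -/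
def edgesOf {d : ℕ} (F : Square d) : Set (Sym2 (V d)) :=
  {s(F.corner, F.corner + uv F.i), s(F.corner, F.corner + uv F.j),
   s(F.corner + uv F.i, F.corner + uv F.i + uv F.j),
   s(F.corner + uv F.j, F.corner + uv F.i + uv F.j)}

/-- A set of plaquettes has empty boundary if every `(d-2)`-facet of the dual
lattice is incident to an even number of its members. -/
def NoBoundary {d : ℕ} (P : Set (Sym2 (V d))) : Prop :=
  ∀ F : Square d, Even (edgesOf F ∩ P).ncard

/-- Two plaquettes are adjacent if their intersection is a `(d-2)`-facet,
equivalently their dual edges are distinct edges of a common unit square. -/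
def plaqAdj {d : ℕ} (e₁ e₂ : Sym2 (V d)) : Prop :=
  e₁ ≠ e₂ ∧ ∃ F : Square d, e₁ ∈ edgesOf F ∧ e₂ ∈ edgesOf F

/-- A set of plaquettes is connected for the adjacency relation `plaqAdj`. -/
def PlaqConnected {d : ℕ} (P : Set (Sym2 (V d))) : Prop :=
  ∀ a ∈ P, ∀ b ∈ P, ReflTransGen (fun u v => plaqAdj u v ∧ u ∈ P ∧ v ∈ P) a b


section Aux

variable {d : ℕ}

lemma latAdj_symm {x y : V d} (h : latAdj x y) : latAdj y x := by
  obtain ⟨i, h1, h2⟩ := h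
  exact ⟨i, by omega, fun j hj => (h2 j hj).symm⟩

lemma compOff_eq {S : Set (V d)} {u v : V d} (hu : u ∉ S) (hv : v ∉ S)
    (h : latAdj u v) : compOff S u = compOff S v := by
  ext z
  constructor
  · intro hz
    exact ReflTransGen.head ⟨latAdj_symm h, hv, hu⟩ hz
  · intro hz
    exact ReflTransGen.head ⟨h, hu, hv⟩ hz

lemma notMem_fillHoles_iff {S : Set (V d)} {y : V d} :
    y ∉ fillHoles S ↔ toInfOff S y := by
  simp only [fillHoles, Set.mem_union, Set.mem_setOf_eq, toInfOff, Set.Infinite]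
  tauto

lemma mem_PiS_iff' {S : Set (V d)} {x y : V d} (h : latAdj x y) :
    s(x, y) ∈ PiS S ↔ (x ∈ S ∧ toInfOff S y) ∨ (y ∈ S ∧ toInfOff S x) := by
  constructor
  · rintro ⟨x', y', _, hxS, hyinf, heq⟩
    rw [Sym2.eq_iff] at heq
    rcases heq with ⟨rfl, rfl⟩ | ⟨rfl, rfl⟩
    · exact Or.inl ⟨hxS, hyinf⟩
    · exact Or.inr ⟨hxS, hyinf⟩
  · rintro (⟨h1, h2⟩ | ⟨h1, h2⟩)
    · exact ⟨x, y, h, h1, h2, rfl⟩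
    · exact ⟨y, x, latAdj_symm h, h1, h2, Sym2.eq_swap.symm⟩

lemma mem_PiS_xor {S : Set (V d)} {x y : V d} (h : latAdj x y) :
    s(x, y) ∈ PiS S ↔ ¬(x ∈ fillHoles S ↔ y ∈ fillHoles S) := by
  rw [mem_PiS_iff' h]
  constructor
  · rintro (⟨h1, h2⟩ | ⟨h1, h2⟩) hiff
    · exact notMem_fillHoles_iff.mpr h2 (hiff.mp (Or.inl h1))
    · exact notMem_fillHoles_iff.mpr h2 (hiff.mpr (Or.inl h1))
  · intro hne
    by_cases hxf : x ∈ fillHoles S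
    · have hyn : y ∉ fillHoles S := fun hy' => hne ⟨fun _ => hy', fun _ => hxf⟩
      have hy2 : toInfOff S y := notMem_fillHoles_iff.mp hyn
      simp only [fillHoles, Set.mem_union, Set.mem_setOf_eq] at hxf
      rcases hxf with hxS | ⟨hxn, hfin⟩
      · exact Or.inl ⟨hxS, hy2⟩
      · exact absurd (by rw [← compOff_eq hxn hy2.1 h]; exact hfin) hy2.2
    · have hyf : y ∈ fillHoles S := by
        by_contra hyn
        exact hne ⟨fun hx' => absurd hx' hxf, fun hy' => absurd hy' hyn⟩
      have hx2 : toInfOff S x := notMem_fillHoles_iff.mp hxf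
      simp only [fillHoles, Set.mem_union, Set.mem_setOf_eq] at hyf
      rcases hyf with hyS | ⟨hyn, hfin⟩
      · exact Or.inr ⟨hyS, hx2⟩
      · exact absurd (by rw [← compOff_eq hyn hx2.1 (latAdj_symm h)]; exact hfin) hx2.2

lemma latAdj_add_uv (x : V d) (i : Fin d) : latAdj x (x + uv i) := by
  refine ⟨i, ?_, fun j hj => ?_⟩
  · have : (x + uv i) i = x i + 1 := by simp [Pi.add_apply, uv]
    rw [this]
    omega
  · simp [Pi.add_apply, uv, hj]

open Classical in
lemma ncard_inter_four {α : Type*} (a b c d' : α) (P : Set α)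
    (hab : a ≠ b) (hac : a ≠ c) (had : a ≠ d') (hbc : b ≠ c) (hbd : b ≠ d')
    (hcd : c ≠ d') :
    (({a, b, c, d'} : Set α) ∩ P).ncard =
      (if a ∈ P then 1 else 0) + (if b ∈ P then 1 else 0) +
      (if c ∈ P then 1 else 0) + (if d' ∈ P then 1 else 0) := by
  classical
  have hset : ({a, b, c, d'} : Set α) ∩ P =
      ↑(({a, b, c, d'} : Finset α).filter (· ∈ P)) := by
    ext x
    simp [and_comm]
  rw [hset, Set.ncard_coe_finset, Finset.card_filter]
  rw [show ({a, b, c, d'} : Finset α) = insert a (insert b (insert c {d'})) from rfl]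
  rw [Finset.sum_insert (by simp [hab, hac, had]),
      Finset.sum_insert (by simp [hbc, hbd]),
      Finset.sum_insert (by simp [hcd]), Finset.sum_singleton]
  ring

end Aux

/-- For a finite connected `A ⊆ ℤ^d` (`d ≥ 2`), the set `Π(A)` of plaquettes
dual to the external edge-boundary of `A` has empty boundary: every
`(d-2)`-facet of the dual lattice is incident to an even number of plaquettes
of `Π(A)`. -/
theorem PiS_noBoundary (d : ℕ) (hd : 2 ≤ d) (A : Set (V d))
    (hfin : A.Finite) (hconn : IsLatConnected A) :
    NoBoundary (PiS A) := by
  intro F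
  classical
  rcases F with ⟨c, i, j, hij⟩
  set v0 : V d := c with hv0
  set v1 : V d := c + uv i with hv1
  set v2 : V d := c + uv j with hv2
  set v3 : V d := c + uv i + uv j with hv3
  have a01 : latAdj v0 v1 := latAdj_add_uv c i
  have a02 : latAdj v0 v2 := latAdj_add_uv c j
  have a13 : latAdj v1 v3 := latAdj_add_uv v1 j
  have a23 : latAdj v2 v3 := by
    refine ⟨i, ?_, fun k hk => ?_⟩
    · have e2 : v2 i = c i := by simp [hv2, Pi.add_apply, uv, hij]
      have e3 : v3 i = c i + 1 := by simp [hv3, Pi.add_apply, uv, hij]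
      rw [e2, e3]
      omega
    · simp [hv2, hv3, Pi.add_apply, uv, hk]
  have h01 : v0 ≠ v1 := by
    intro h; have := congrFun h i
    simp [hv0, hv1, Pi.add_apply, uv] at this
  have h02 : v0 ≠ v2 := by
    intro h; have := congrFun h j
    simp [hv0, hv2, Pi.add_apply, uv] at this
  have h03 : v0 ≠ v3 := by
    intro h; have := congrFun h i
    simp [hv0, hv3, Pi.add_apply, uv, hij, hij.symm] at this
  have h12 : v1 ≠ v2 := by
    intro h; have := congrFun h i
    simp [hv1, hv2, Pi.add_apply, uv, hij, hij.symm] at this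
  have h13 : v1 ≠ v3 := by
    intro h; have := congrFun h j
    simp [hv1, hv3, Pi.add_apply, uv, hij, hij.symm] at this
  have h23 : v2 ≠ v3 := by
    intro h; have := congrFun h i
    simp [hv2, hv3, Pi.add_apply, uv, hij, hij.symm] at this
  have E1 : s(v0, v1) ≠ s(v0, v2) := by
    simp [Sym2.eq_iff, h01, h02, h12, h01.symm]
  have E2 : s(v0, v1) ≠ s(v1, v3) := by
    simp [Sym2.eq_iff, h01, h03, h13, h01.symm]
  have E3 : s(v0, v1) ≠ s(v2, v3) := by
    simp [Sym2.eq_iff, h02, h03, h12, h13]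
  have E4 : s(v0, v2) ≠ s(v1, v3) := by
    simp [Sym2.eq_iff, h01, h03, h12, h23, h12.symm]
  have E5 : s(v0, v2) ≠ s(v2, v3) := by
    simp [Sym2.eq_iff, h02, h03, h23, h02.symm]
  have E6 : s(v1, v3) ≠ s(v2, v3) := by
    simp [Sym2.eq_iff, h12, h13, h23, h13.symm]
  have hedges : edgesOf ⟨c, i, j, hij⟩ =
      ({s(v0, v1), s(v0, v2), s(v1, v3), s(v2, v3)} : Set (Sym2 (V d))) := rfl
  show Even ((edgesOf ⟨c, i, j, hij⟩ ∩ PiS A).ncard)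
  rw [hedges, ncard_inter_four _ _ _ _ _ E1 E2 E3 E4 E5 E6]
  simp only [mem_PiS_xor a01, mem_PiS_xor a02, mem_PiS_xor a13, mem_PiS_xor a23]
  by_cases b0 : v0 ∈ fillHoles A <;> by_cases b1 : v1 ∈ fillHoles A <;>
    by_cases b2 : v2 ∈ fillHoles A <;> by_cases b3 : v3 ∈ fillHoles A <;>
    simp [b0, b1, b2, b3] <;> decide
end

section
/- Let A ⊆ Z^d be infinite and connected, and suppose the complement of A has an infinite connected component. Then there exists an infinite surface (an infinite connected set of plaquettes with empty boundary) consisting of plaquettes dual to edges of Z^d having one endpoint in A and the other in the complement of A. -/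
open Set Relation Filter

/-!
The surface is the edge boundary of the infinite component `C` of `Aᶜ`, i.e. the plaquettes dual
to the edges leaving `C`; such an edge runs from `A` into `Aᶜ`, and every unit square contains an
even number of boundary edges of any vertex set. It is infinite because both `C` and `Cᶜ ⊇ A` have
points outside every box, and for `d ≥ 2` the complement of a box is connected. It is connected
because `C` and `Cᶜ` are both lattice-connected: if the plaquette component `Q` of one boundary
plaquette missed another one, `Q` would still have empty boundary, so (closed `ℤ/2`-valued 1-forms
on `ℤ^d` being exact) `Q` would be the coboundary of a potential `σ`. But `σ` is constant on `C`
and on `Cᶜ`, so `Q` contains either every boundary plaquette or none.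
-/

lemma Relation.ReflTransGen.exists_crossing {α : Type*} {r : α → α → Prop} {C : Set α} {x y : α}
    (h : ReflTransGen r x y) (hx : x ∉ C) (hy : y ∈ C) : ∃ u v, r u v ∧ u ∉ C ∧ v ∈ C := by
  induction h with
  | refl => exact absurd hy hx
  | @tail p _ _ hpq ih =>
    by_cases hp : p ∈ C
    exacts [ih hp, ⟨p, _, hpq, hp, hy⟩]

section LatticePaths

variable {d : ℕ}

abbrev latAdjIn (S : Set (V d)) (u v : V d) : Prop := latAdj u v ∧ u ∈ S ∧ v ∈ S

lemma latAdjIn_symm {S : Set (V d)} {x y : V d} (h : latAdjIn S x y) : latAdjIn S y x :=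
  ⟨latAdj_symm h.1, h.2.2, h.2.1⟩

lemma reflTransGen_latAdjIn_symm {S : Set (V d)} {x y : V d}
    (h : ReflTransGen (latAdjIn S) x y) : ReflTransGen (latAdjIn S) y x :=
  reflTransGen_swap.mp (ReflTransGen.mono (fun _ _ => latAdjIn_symm) _ _ h)

lemma latAdj_iff_exists_uv {x y : V d} : latAdj x y ↔ ∃ i, y = x + uv i ∨ x = y + uv i := by
  refine ⟨fun ⟨i, h1, h2⟩ => ⟨i, ?_⟩, ?_⟩
  · have : y i = x i + 1 ∨ x i = y i + 1 := by omega
    refine this.imp (fun h => funext fun l => ?_) (fun h => funext fun l => ?_) <;>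
      by_cases hl : l = i <;> simp_all [uv]
  · rintro ⟨i, rfl | rfl⟩
    exacts [latAdj_add_uv x i, latAdj_symm (latAdj_add_uv y i)]

lemma update_add_one (v : V d) (i : Fin d) (k : ℤ) :
    Function.update v i (k + 1) = Function.update v i k + uv i := by
  funext l
  by_cases hl : l = i <;> simp [uv, hl]

lemma reflTransGen_update {S : Set (V d)} (z : V d) (i : Fin d)
    (hS : ∀ k, Function.update z i k ∈ S) (t : ℤ) :
    ReflTransGen (latAdjIn S) z (Function.update z i t) := by
  have step : ∀ k, latAdjIn S (Function.update z i k) (Function.update z i (k + 1)) :=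
    fun k => ⟨update_add_one z i k ▸ latAdj_add_uv _ i, hS _, hS _⟩
  suffices ∀ n : ℤ, ReflTransGen (latAdjIn S) z (Function.update z i (z i + n)) by
    simpa using this (t - z i)
  intro n
  induction n using Int.induction_on with
  | zero => simpa using .refl
  | succ n ih => exact ih.tail (by simpa [add_assoc] using step (z i + n))
  | pred n ih =>
    have := step (z i + (-n - 1))
    rw [add_assoc, sub_add_cancel] at this
    exact ih.tail (latAdjIn_symm this)

lemma reflTransGen_piecewise {S : Set (V d)} (z c : V d) (s : Finset (Fin d))
    (hS : ∀ v, (∀ l ∉ s, v l = z l) → v ∈ S) :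
    ReflTransGen (latAdjIn S) z (s.piecewise c z) := by
  induction s using Finset.induction_on with
  | empty => simpa using .refl
  | insert a s ha ih =>
    rw [Finset.piecewise_insert]
    refine (ih fun v hv => hS v fun l hl => hv l (by simp_all)).trans
      (reflTransGen_update _ a (fun k => hS _ fun l hl => ?_) _)
    simp only [Finset.mem_insert, not_or] at hl
    simp [Function.update_of_ne hl.1, Finset.piecewise_eq_of_notMem _ _ _ hl.2]

lemma reflTransGen_latAdj (x y : V d) : ReflTransGen latAdj x y := by
  simpa using ReflTransGen.mono (fun _ _ h => h.1) _ _
    (reflTransGen_piecewise (S := univ) x y Finset.univ (by simp))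

lemma isLatConnected_of_forall_reflTransGen {S : Set (V d)} (c : V d)
    (h : ∀ a ∈ S, ReflTransGen (latAdjIn S) a c) : IsLatConnected S :=
  fun a ha b hb => (h a ha).trans (reflTransGen_latAdjIn_symm (h b hb))

-- Keep a coordinate `i` at which `v` leaves the box fixed while moving the others to `hi + 1`,
-- then move `i`.
lemma isLatConnected_compl_Icc (hd : 2 ≤ d) (lo hi : V d) : IsLatConnected (Icc lo hi)ᶜ := by
  refine isLatConnected_of_forall_reflTransGen (hi + 1) fun v hv => ?_
  obtain ⟨i, hi'⟩ : ∃ i, v i ∉ Icc (lo i) (hi i) := by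
    simpa [← pi_univ_Icc] using hv
  have : Nontrivial (Fin d) := Fin.nontrivial_iff_two_le.mpr hd
  obtain ⟨j, hj⟩ := exists_ne i
  set v' := (Finset.univ.erase i).piecewise (hi + 1) v
  have h₁ : ReflTransGen (latAdjIn (Icc lo hi)ᶜ) v v' := by
    refine reflTransGen_piecewise _ _ _ fun u hu hu' => hi' ?_
    rw [← hu i (by simp)]
    exact ⟨hu'.1 i, hu'.2 i⟩
  have h₂ : ReflTransGen (latAdjIn (Icc lo hi)ᶜ) v'
      (({i} : Finset (Fin d)).piecewise (hi + 1) v') := by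
    refine reflTransGen_piecewise _ _ _ fun u hu hu' => ?_
    have := hu'.2 j
    rw [hu j (by simpa using hj)] at this
    simp [v', hj] at this
  convert h₁.trans h₂ using 1
  funext l
  by_cases hl : l = i <;> simp [v', hl]

end LatticePaths

section Components

variable {d : ℕ} {A : Set (V d)} {w : V d}

lemma compOff_subset_compl (hw : w ∉ A) : compOff A w ⊆ Aᶜ := by
  intro z hz
  rcases hz.cases_tail with rfl | ⟨_, _, hstep⟩
  exacts [hw, hstep.2.2]

lemma mem_compOff_of_latAdj {p q : V d} (hp : p ∈ compOff A w) (hpA : p ∉ A)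
    (hpq : latAdj p q) (hq : q ∉ A) : q ∈ compOff A w :=
  ReflTransGen.tail hp ⟨hpq, hpA, hq⟩

lemma reflTransGen_latAdjIn_compOff {z : V d} (hz : z ∈ compOff A w) :
    ReflTransGen (latAdjIn (compOff A w)) w z := by
  induction hz with
  | refl => exact .refl
  | @tail p q hwp hpq ih => exact ih.tail ⟨hpq.1, hwp, hwp.tail hpq⟩

lemma isLatConnected_compOff (A : Set (V d)) (w : V d) : IsLatConnected (compOff A w) :=
  isLatConnected_of_forall_reflTransGen w fun _ ha =>
    reflTransGen_latAdjIn_symm (reflTransGen_latAdjIn_compOff ha)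

lemma compOff_subset_compl_compOff {u : V d} (hu : u ∉ compOff A w) :
    compOff A u ⊆ (compOff A w)ᶜ := fun _ hzu hzw =>
  hu (ReflTransGen.trans hzw (reflTransGen_latAdjIn_symm (S := Aᶜ) hzu))

lemma isLatConnected_compl_compOff (hA : IsLatConnected A) {a : V d} (ha : a ∈ A) (hw : w ∉ A) :
    IsLatConnected (compOff A w)ᶜ := by
  set C := compOff A w
  have hAC : A ⊆ Cᶜ := fun x hx hxC => compOff_subset_compl hw hxC hx
  have toA : ∀ x ∈ A, ReflTransGen (latAdjIn Cᶜ) x a := fun x hx =>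
    ReflTransGen.mono (fun _ _ h => ⟨h.1, hAC h.2.1, hAC h.2.2⟩) _ _ (hA x hx a ha)
  refine isLatConnected_of_forall_reflTransGen a fun u hu => ?_
  by_cases huA : u ∈ A
  · exact toA u huA
  obtain ⟨b, a', hba', hb, ha'⟩ := (reflTransGen_latAdj u a).exists_crossing
    (C := (compOff A u)ᶜ) (by simpa using .refl) (fun h => compOff_subset_compl huA h ha)
  rw [mem_compl_iff, not_not] at hb
  have ha'A : a' ∈ A := by
    by_contra h
    exact ha' (mem_compOff_of_latAdj hb (compOff_subset_compl huA hb) hba' h)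
  have hub : ReflTransGen (latAdjIn Cᶜ) u b :=
    ReflTransGen.mono (fun _ _ h => ⟨h.1, compOff_subset_compl_compOff hu h.2.1,
      compOff_subset_compl_compOff hu h.2.2⟩) _ _ (reflTransGen_latAdjIn_compOff hb)
  exact (hub.tail ⟨hba', compOff_subset_compl_compOff hu hb, hAC ha'A⟩).trans (toA a' ha'A)

end Components

section Potential

variable {d : ℕ}

-- Over `ZMod 2` the orientation of the edges `k → k + 1` is irrelevant, so one formula covers
-- `t < 0` as well.
noncomputable def segSum (g : ℤ → ZMod 2) (t : ℤ) : ZMod 2 :=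
  ∑ k ∈ Finset.Ico (min 0 t) (max 0 t), g k

lemma segSum_add_one (g : ℤ → ZMod 2) (t : ℤ) : segSum g (t + 1) = segSum g t + g t := by
  rcases le_or_gt 0 t with ht | ht
  · have : Finset.Ico 0 (t + 1) = insert t (Finset.Ico 0 t) := by
      ext; simp only [Finset.mem_Ico, Finset.mem_insert]; omega
    rw [segSum, segSum, min_eq_left ht, max_eq_right ht, min_eq_left (by omega),
      max_eq_right (by omega), this, Finset.sum_insert (by simp), add_comm]
  · have : Finset.Ico t 0 = insert t (Finset.Ico (t + 1) 0) := by
      ext; simp only [Finset.mem_Ico, Finset.mem_insert]; omega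
    rw [segSum, segSum, min_eq_right ht.le, max_eq_left ht.le, min_eq_right (by omega),
      max_eq_left (by omega), this, Finset.sum_insert (by simp)]
    grind

lemma segSum_telescope (h : ℤ → ZMod 2) (t : ℤ) :
    segSum (fun k => h k + h (k + 1)) t = h 0 + h t := by
  induction t using Int.induction_on with
  | zero => simp [segSum, CharTwo.add_self_eq_zero]
  | succ n ih => rw [segSum_add_one, ih]; grind
  | pred n ih =>
    have := segSum_add_one (fun k => h k + h (k + 1)) (-n - 1)
    rw [sub_add_cancel, ih] at this
    grind

def trunc (m : ℕ) (x : V d) : V d := fun l => if (l : ℕ) < m then x l else 0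

lemma trunc_eq_self_of_le {m : ℕ} (hm : d ≤ m) (x : V d) : trunc m x = x :=
  funext fun l => if_pos (by omega)

lemma update_trunc_zero (x : V d) (j : Fin d) : Function.update (trunc j x) j 0 = trunc j x :=
  Function.update_eq_self_iff.mpr (if_neg (lt_irrefl _)).symm

lemma update_trunc_self (x : V d) (j : Fin d) :
    Function.update (trunc j x) j (x j) = trunc (j + 1) x := by
  funext l
  by_cases hl : l = j
  · subst hl; simp [trunc]
  · have : (l : ℕ) < j ↔ (l : ℕ) < j + 1 := by
      have := Fin.val_ne_of_ne hl
      omega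
    simp only [Function.update_of_ne hl, trunc, this]

lemma trunc_add_uv_of_lt {m : ℕ} {i : Fin d} (hi : (i : ℕ) < m) (x : V d) :
    trunc m (x + uv i) = trunc m x + uv i := by
  funext l
  by_cases hl : l = i
  · subst hl; simp [trunc, uv, hi]
  · simp [trunc, uv, hl]

lemma trunc_add_uv_of_le {m : ℕ} {i : Fin d} (hi : m ≤ (i : ℕ)) (x : V d) :
    trunc m (x + uv i) = trunc m x := by
  funext l
  by_cases hl : l = i
  · subst hl; simp [trunc, show ¬ (l : ℕ) < m by omega]
  · simp [trunc, uv, hl]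

lemma update_add_uv_of_ne {i j : Fin d} (hij : i ≠ j) (v : V d) (k : ℤ) :
    Function.update (v + uv i) j k = Function.update v j k + uv i := by
  funext l
  by_cases hl : l = j
  · subst hl; simp [uv, hij.symm]
  · simp [Function.update_of_ne hl]

lemma segSum_add (f g : ℤ → ZMod 2) (t : ℤ) :
    segSum f t + segSum g t = segSum (fun k => f k + g k) t :=
  Finset.sum_add_distrib.symm

def IsClosedForm (ω : V d → Fin d → ZMod 2) : Prop :=
  ∀ z i j, ω z i + ω (z + uv i) j = ω z j + ω (z + uv j) i

-- `potential ω x` sums `ω` along the staircase path from `0` to `x` that adjusts the coordinates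
-- `0, 1, …, d - 1` in turn; `lineSum ω x j` is its segment in direction `j`.
noncomputable def lineSum (ω : V d → Fin d → ZMod 2) (x : V d) (j : Fin d) : ZMod 2 :=
  segSum (fun k => ω (Function.update (trunc j x) j k) j) (x j)

noncomputable def potential (ω : V d → Fin d → ZMod 2) (x : V d) : ZMod 2 :=
  ∑ j, lineSum ω x j

variable (ω : V d → Fin d → ZMod 2) (x : V d)

lemma lineSum_add_uv_of_lt {i j : Fin d} (hji : j < i) :
    lineSum ω (x + uv i) j = lineSum ω x j := by
  simp [lineSum, trunc_add_uv_of_le (Fin.val_fin_le.mpr hji.le), uv, hji.ne]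

lemma lineSum_add_uv_self (i : Fin d) :
    lineSum ω (x + uv i) i = lineSum ω x i + ω (trunc (i + 1) x) i := by
  simp [lineSum, trunc_add_uv_of_le le_rfl, uv, segSum_add_one, update_trunc_self]

lemma lineSum_add_lineSum_add_uv_of_lt (hω : IsClosedForm ω) {i j : Fin d} (hij : i < j) :
    lineSum ω x j + lineSum ω (x + uv i) j = ω (trunc j x) i + ω (trunc (j + 1) x) i := by
  have hx : (x + uv i) j = x j := by simp [uv, hij.ne']
  have hsq : ∀ k, ω (Function.update (trunc j x) j k) j
      + ω (Function.update (trunc j x) j k + uv i) j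
      = ω (Function.update (trunc j x) j k) i + ω (Function.update (trunc j x) j (k + 1)) i := by
    intro k
    have := hω (Function.update (trunc j x) j k) i j
    rw [update_add_one]
    grind
  calc lineSum ω x j + lineSum ω (x + uv i) j
      = segSum (fun k => ω (Function.update (trunc j x) j k) i
          + ω (Function.update (trunc j x) j (k + 1)) i) (x j) := by
        rw [lineSum, lineSum, hx, trunc_add_uv_of_lt hij, segSum_add]
        simp_rw [update_add_uv_of_ne hij.ne, hsq]
    _ = _ := by rw [segSum_telescope, update_trunc_zero, update_trunc_self]

lemma potential_add_potential_add_uv (hω : IsClosedForm ω) (i : Fin d) :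
    potential ω x + potential ω (x + uv i) = ω x i := by
  -- `T m` is `ω` on the edge from `trunc m x` to `trunc m (x + uv i)`, degenerate for `m ≤ i`.
  set T : ℕ → ZMod 2 := fun m => if (i : ℕ) < m then ω (trunc m x) i else 0
  have hline : ∀ j : Fin d, lineSum ω x j + lineSum ω (x + uv i) j = T j + T (j + 1) := by
    intro j
    rcases lt_trichotomy j i with hji | rfl | hij
    · have : ¬ (i : ℕ) < j + 1 := by omega
      simp [T, lineSum_add_uv_of_lt ω x hji, this, hji.not_gt, CharTwo.add_self_eq_zero]
    · simp [T, lineSum_add_uv_self, ← add_assoc, CharTwo.add_self_eq_zero]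
    · have : (i : ℕ) < j := hij
      simp [T, lineSum_add_lineSum_add_uv_of_lt ω x hω hij, this, show (i : ℕ) < j + 1 by omega]
  calc potential ω x + potential ω (x + uv i)
      = ∑ m ∈ Finset.range d, (T (m + 1) - T m) := by
        rw [potential, potential, ← Finset.sum_add_distrib, Finset.sum_congr rfl fun j _ => hline j,
          ← Fin.sum_univ_eq_sum_range (fun m => T (m + 1) - T m)]
        simp_rw [CharTwo.sub_eq_add, add_comm]
    _ = ω x i := by rw [Finset.sum_range_sub]; simp [T, trunc_eq_self_of_le le_rfl]

end Potential

lemma natCast_ncard_inter_eq_sum {α : Type*} (t : Finset α) (P : Set α) :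
    (((t : Set α) ∩ P).ncard : ZMod 2) = ∑ e ∈ t, P.indicator 1 e := by
  classical
  have : (t : Set α) ∩ P = ↑(t.filter (· ∈ P)) := by ext; simp
  rw [this, Set.ncard_coe_finset, Finset.card_filter, Nat.cast_sum]
  refine Finset.sum_congr rfl fun e _ => ?_
  by_cases he : e ∈ P <;> simp [he]

lemma even_ncard_edgesOf_inter_iff {d : ℕ} (F : Square d) (P : Set (Sym2 (V d))) :
    Even (edgesOf F ∩ P).ncard ↔
      P.indicator 1 s(F.corner, F.corner + uv F.i) + P.indicator 1 s(F.corner, F.corner + uv F.j)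
        + P.indicator 1 s(F.corner + uv F.i, F.corner + uv F.i + uv F.j)
        + P.indicator 1 s(F.corner + uv F.j, F.corner + uv F.i + uv F.j) = (0 : ZMod 2) := by
  obtain ⟨c, i, j, hij⟩ := F
  have hi : uv i ≠ 0 := fun h => by simpa [uv] using congrFun h i
  have hj : uv j ≠ 0 := fun h => by simpa [uv] using congrFun h j
  have hij' : uv i ≠ uv j := fun h => by simpa [uv, hij] using congrFun h i
  have hij'' : uv i + uv j ≠ 0 := fun h => by simpa [uv, hij] using congrFun h i
  have hF : edgesOf ⟨c, i, j, hij⟩ = ↑({s(c, c + uv i), s(c, c + uv j),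
      s(c + uv i, c + uv i + uv j), s(c + uv j, c + uv i + uv j)} : Finset (Sym2 (V d))) := by
    simp [edgesOf]
  rw [← ZMod.natCast_eq_zero_iff_even, hF, natCast_ncard_inter_eq_sum,
    Finset.sum_insert, Finset.sum_insert, Finset.sum_insert, Finset.sum_singleton, ← add_assoc,
    ← add_assoc]
  all_goals simp [add_assoc, hi, hj, hij', hij'', hij'.symm]

section Surfaces

variable {d : ℕ}

noncomputable def plaqForm (P : Set (Sym2 (V d))) (x : V d) (i : Fin d) : ZMod 2 :=
  P.indicator 1 s(x, x + uv i)

lemma NoBoundary.isClosedForm {P : Set (Sym2 (V d))} (hP : NoBoundary P) :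
    IsClosedForm (plaqForm P) := by
  intro z i j
  rcases eq_or_ne i j with rfl | hij
  · rfl
  have := (even_ncard_edgesOf_inter_iff ⟨z, i, j, hij⟩ P).mp (hP _)
  simp only [plaqForm, add_right_comm z (uv j) (uv i)] at this ⊢
  grind

lemma NoBoundary.potential_add_potential {P : Set (Sym2 (V d))} (hP : NoBoundary P)
    {x y : V d} (h : latAdj x y) :
    potential (plaqForm P) x + potential (plaqForm P) y = P.indicator 1 s(x, y) := by
  obtain ⟨i, rfl | rfl⟩ := latAdj_iff_exists_uv.mp h
  · exact potential_add_potential_add_uv _ x hP.isClosedForm i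
  · rw [add_comm, Sym2.eq_swap]
    exact potential_add_potential_add_uv _ y hP.isClosedForm i

lemma NoBoundary.of_closed {P Q : Set (Sym2 (V d))} (hP : NoBoundary P) (hQP : Q ⊆ P)
    (hQ : ∀ e ∈ Q, ∀ e' ∈ P, plaqAdj e e' → e' ∈ Q) : NoBoundary Q := by
  intro F
  rcases (edgesOf F ∩ Q).eq_empty_or_nonempty with h | ⟨e, heF, heQ⟩
  · simp [h]
  have : edgesOf F ∩ Q = edgesOf F ∩ P := by
    refine subset_antisymm (inter_subset_inter_right _ hQP) fun e' ⟨he'F, he'P⟩ => ⟨he'F, ?_⟩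
    rcases eq_or_ne e e' with rfl | hne
    exacts [heQ, hQ e heQ e' he'P ⟨hne, F, heF, he'F⟩]
  rw [this]
  exact hP F

def edgeBoundary (C : Set (V d)) : Set (Sym2 (V d)) :=
  {e | ∃ x y, latAdj x y ∧ x ∉ C ∧ y ∈ C ∧ e = s(x, y)}

lemma mk_mem_edgeBoundary_iff {C : Set (V d)} {x y : V d} (h : latAdj x y) :
    s(x, y) ∈ edgeBoundary C ↔ ¬(x ∈ C ↔ y ∈ C) := by
  constructor
  · rintro ⟨a, b, -, ha, hb, he⟩
    rcases Sym2.eq_iff.mp he with ⟨rfl, rfl⟩ | ⟨rfl, rfl⟩ <;> tauto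
  · intro hxy
    by_cases hx : x ∈ C
    · exact ⟨y, x, latAdj_symm h, by tauto, hx, Sym2.eq_swap⟩
    · exact ⟨x, y, h, hx, by tauto, rfl⟩

lemma indicator_edgeBoundary {C : Set (V d)} {x y : V d} (h : latAdj x y) :
    (edgeBoundary C).indicator 1 s(x, y) = C.indicator (1 : V d → ZMod 2) x + C.indicator 1 y := by
  by_cases hx : x ∈ C <;> by_cases hy : y ∈ C <;>
    simp [Set.indicator, mk_mem_edgeBoundary_iff h, hx, hy]; decide

lemma noBoundary_edgeBoundary (C : Set (V d)) : NoBoundary (edgeBoundary C) := by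
  rintro F
  rw [even_ncard_edgesOf_inter_iff, indicator_edgeBoundary (latAdj_add_uv _ _),
    indicator_edgeBoundary (latAdj_add_uv _ _), indicator_edgeBoundary (latAdj_add_uv _ _),
    add_right_comm F.corner (uv F.i), indicator_edgeBoundary (latAdj_add_uv _ _)]
  grind

lemma IsLatConnected.eq_of_forall_latAdj {S : Set (V d)} (hS : IsLatConnected S) {β : Type*}
    {f : V d → β} (hf : ∀ x y, latAdjIn S x y → f x = f y) {x y : V d} (hx : x ∈ S)
    (hy : y ∈ S) : f x = f y := by
  have hxy := hS x hx y hy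
  clear hy
  induction hxy with
  | refl => rfl
  | tail _ hpq ih => exact ih.trans (hf _ _ hpq)

lemma plaqConnected_edgeBoundary {C : Set (V d)} (hC : IsLatConnected C)
    (hCc : IsLatConnected Cᶜ) : PlaqConnected (edgeBoundary C) := by
  intro a ha b hb
  by_contra hab
  set Q := {e ∈ edgeBoundary C | ReflTransGen
    (fun u v => plaqAdj u v ∧ u ∈ edgeBoundary C ∧ v ∈ edgeBoundary C) a e}
  have hQ : NoBoundary Q := (noBoundary_edgeBoundary C).of_closed (sep_subset _ _)
    fun e ⟨heS, hae⟩ e' he'S hee' => ⟨he'S, hae.tail ⟨hee', heS, he'S⟩⟩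
  have hσ : ∀ S : Set (V d), IsLatConnected S → S ⊆ C ∨ S ⊆ Cᶜ →
      ∀ x ∈ S, ∀ y ∈ S, potential (plaqForm Q) x = potential (plaqForm Q) y := by
    intro S hS hSC x hx y hy
    refine hS.eq_of_forall_latAdj (fun u v huv => ?_) hx hy
    have : s(u, v) ∉ Q := fun h => (mk_mem_edgeBoundary_iff huv.1).mp h.1 (by
      rcases hSC with h | h
      · exact iff_of_true (h huv.2.1) (h huv.2.2)
      · exact iff_of_false (h huv.2.1) (h huv.2.2))
    have h := hQ.potential_add_potential huv.1
    rw [Set.indicator_of_notMem this] at h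
    exact CharTwo.add_eq_zero.mp h
  have haQ : a ∈ Q := ⟨ha, .refl⟩
  have hbQ : b ∉ Q := fun h => hab h.2
  obtain ⟨xa, ya, hxya, hxa, hya, rfl⟩ := ha
  obtain ⟨xb, yb, hxyb, hxb, hyb, rfl⟩ := hb
  have h1 := hQ.potential_add_potential hxya
  have h2 := hQ.potential_add_potential hxyb
  rw [Set.indicator_of_mem haQ] at h1
  rw [Set.indicator_of_notMem hbQ] at h2
  rw [Pi.one_apply, hσ C hC (.inl le_rfl) ya hya yb hyb, hσ Cᶜ hCc (.inr le_rfl) xa hxa xb hxb,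
    h2] at h1
  exact zero_ne_one h1

end Surfaces

lemma edgeBoundary_compOff {d : ℕ} {A : Set (V d)} {w : V d} (hw : w ∉ A) :
    ∀ e ∈ edgeBoundary (compOff A w), ∃ x y, latAdj x y ∧ x ∈ A ∧ y ∉ A ∧ e = s(x, y) := by
  rintro e ⟨x, y, hxy, hx, hy, rfl⟩
  have hyA := compOff_subset_compl hw hy
  refine ⟨x, y, hxy, by_contra fun hxA => hx ?_, hyA, rfl⟩
  exact mem_compOff_of_latAdj hy hyA (latAdj_symm hxy) hxA

lemma edgeBoundary_infinite {d : ℕ} (hd : 2 ≤ d) {C : Set (V d)} (hC : C.Infinite)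
    (hCc : Cᶜ.Infinite) : (edgeBoundary C).Infinite := by
  intro hfin
  obtain ⟨hi, hhi⟩ := (hfin.biUnion fun e _ => e.toFinset.finite_toSet).bddAbove
  obtain ⟨lo, hlo⟩ := (hfin.biUnion fun e _ => e.toFinset.finite_toSet).bddBelow
  obtain ⟨x, hxC, hx⟩ := (hCc.sdiff (finite_Icc lo hi)).nonempty
  obtain ⟨y, hyC, hy⟩ := (hC.sdiff (finite_Icc lo hi)).nonempty
  obtain ⟨u, v, ⟨huv, -, hv⟩, hu, hvC⟩ :=
    (isLatConnected_compl_Icc hd lo hi x hx y hy).exists_crossing hxC hyC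
  have hv' : v ∈ ⋃ e ∈ edgeBoundary C, (e.toFinset : Set (V d)) :=
    mem_biUnion ⟨u, v, huv, hu, hvC, rfl⟩ (by simp)
  exact hv ⟨hlo hv', hhi hv'⟩

/-- If `A ⊆ ℤ^d` is infinite and connected and its complement has an infinite
connected component, then there exists an infinite surface (an infinite
connected set of plaquettes with empty boundary) consisting of plaquettes dual
to edges with one endpoint in `A` and the other in the complement of `A`. -/
theorem infinite_surface_separating (d : ℕ) (hd : 2 ≤ d) (A : Set (V d))
    (hinf : A.Infinite) (hconn : IsLatConnected A)
    (hcomp : ∃ w, w ∉ A ∧ (compOff A w).Infinite) :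
    ∃ S : Set (Sym2 (V d)), S.Infinite ∧
      (∀ e ∈ S, ∃ x y, latAdj x y ∧ x ∈ A ∧ y ∉ A ∧ e = s(x, y)) ∧
      PlaqConnected S ∧ NoBoundary S := by
  obtain ⟨w, hw, hC⟩ := hcomp
  obtain ⟨a, ha⟩ := hinf.nonempty
  have hAC : A ⊆ (compOff A w)ᶜ := fun x hx hxC => compOff_subset_compl hw hxC hx
  exact ⟨edgeBoundary (compOff A w), edgeBoundary_infinite hd hC (hinf.mono hAC),
    edgeBoundary_compOff hw,
    plaqConnected_edgeBoundary (isLatConnected_compOff A w)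
      (isLatConnected_compl_compOff hconn ha hw),
    noBoundary_edgeBoundary _⟩
end
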